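/- arXiv:1506.05876 — 2 statements merged into one kernel-verified Lean document; each statement's English description precedes it below -/
import Mathlib

section
/- For every x ∈ X the limit Φ(x) := lim_{δ↓0} (φ(x) − φ_δ(x))/δ exists and lies in [0,1]. Moreover Φ(x) = 1 for every x ∈ Z, and Φ(x) = 0 for every x ∈ X ∖ S(Z). -/
/-!
Fix `x` and let `y₀` minimise the continuous function `y ↦ φ y + d y x` on the compact set `Z`.
Since `x` minimises this function on all of `X`, the infimum defining `φ_δ x` is attained either at
`x` or at `y₀`, so `φ x - φ_δ x = max (δ - a) 0` with gap `a = φ y₀ + d y₀ x - φ x ≥ 0`.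
Divided by `δ` this tends to `1` if `a = 0` and to `0` if `a > 0`; on `Z` the gap vanishes, and a
vanishing gap means `φ x - φ y₀ = d y₀ x`, i.e. `x ∈ S(Z)`.
-/

open Filter Topology Set

theorem continuous_of_forall_sub_le {X : Type*} [TopologicalSpace X] {d : X → X → ℝ}
    (hd_refl : ∀ x, d x x = 0) (hd_cont : Continuous fun p : X × X => d p.1 p.2)
    {φ : X → ℝ} (hφ : ∀ x y, φ y - φ x ≤ d x y) : Continuous φ := by
  refine continuous_iff_continuousAt.2 fun x₀ => ?_
  have hleft : Tendsto (fun y => φ x₀ - d y x₀) (𝓝 x₀) (𝓝 (φ x₀)) := by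
    have := (hd_cont.comp (continuous_id.prodMk (continuous_const (y := x₀)))).tendsto x₀
    simpa [hd_refl] using tendsto_const_nhds.sub this
  have hright : Tendsto (fun y => φ x₀ + d x₀ y) (𝓝 x₀) (𝓝 (φ x₀)) := by
    have := (hd_cont.comp ((continuous_const (y := x₀)).prodMk continuous_id)).tendsto x₀
    simpa [hd_refl] using tendsto_const_nhds.add this
  exact tendsto_of_tendsto_of_tendsto_of_le_of_le hleft hright
    (fun y => by linarith [hφ y x₀]) (fun y => by linarith [hφ x₀ y])

theorem iInf_sub_mul_indicator_eq_min {X : Type*} {f : X → ℝ} {Z : Set X} {x y₀ : X}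
    (hx : ∀ y, f x ≤ f y) (hy₀ : y₀ ∈ Z) (hmin : IsMinOn f Z y₀) {δ : ℝ} (hδ : 0 ≤ δ) :
    ⨅ y, (f y - δ * Z.indicator (fun _ => (1 : ℝ)) y) = min (f x) (f y₀ - δ) := by
  have hind : ∀ y, 0 ≤ Z.indicator (fun _ => (1 : ℝ)) y ∧ Z.indicator (fun _ => (1 : ℝ)) y ≤ 1 :=
    fun y => by by_cases hy : y ∈ Z <;> simp [hy]
  have hbdd : BddBelow (range fun y => f y - δ * Z.indicator (fun _ => (1 : ℝ)) y) := by
    refine ⟨f x - δ, forall_mem_range.2 fun y => ?_⟩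
    nlinarith [hx y, hind y]
  have : Nonempty X := ⟨x⟩
  refine le_antisymm (le_min ?_ ?_) (le_ciInf fun y => ?_)
  · exact (ciInf_le hbdd x).trans (by nlinarith [hind x])
  · exact (ciInf_le hbdd y₀).trans (by simp [indicator_of_mem hy₀])
  · by_cases hy : y ∈ Z
    · rw [indicator_of_mem hy, mul_one]
      exact (min_le_right _ _).trans (sub_le_sub_right (hmin hy) δ)
    · rw [indicator_of_notMem hy, mul_zero, sub_zero]
      exact (min_le_left _ _).trans (hx y)

theorem tendsto_max_sub_div_nhdsGT {a : ℝ} (ha : 0 ≤ a) :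
    Tendsto (fun δ : ℝ => max (δ - a) 0 / δ) (𝓝[>] 0) (𝓝 (if a = 0 then 1 else 0)) := by
  refine tendsto_const_nhds.congr' ?_
  split_ifs with ha0
  · filter_upwards [self_mem_nhdsWithin] with δ (hδ : 0 < δ)
    simp [ha0, hδ.le, hδ.ne']
  · filter_upwards [Ioo_mem_nhdsGT (lt_of_le_of_ne ha (Ne.symm ha0))] with δ hδ
    simp [max_eq_right (by linarith [hδ.2] : δ - a ≤ 0)]

theorem stmt_8_general {X : Type*} [TopologicalSpace X]
    (d : X → X → ℝ)
    (hd_refl : ∀ x, d x x = 0)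
    (hd_cont : Continuous fun p : X × X => d p.1 p.2)
    (φ : X → ℝ) (hφ : ∀ x y, φ y - φ x ≤ d x y)
    (Z : Set X) (hZne : Z.Nonempty) (hZc : IsCompact Z)
    (φd : ℝ → X → ℝ)
    (hφd : ∀ δ : ℝ, 0 < δ → ∀ x,
      φd δ x = ⨅ y : X, (φ y + d y x - δ * Set.indicator Z (fun _ => (1 : ℝ)) y)) :
    ∀ x : X, ∃ L : ℝ, L ∈ Set.Icc (0 : ℝ) 1 ∧
      Tendsto (fun δ : ℝ => (φ x - φd δ x) / δ) (𝓝[>] (0 : ℝ)) (𝓝 L) ∧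
      (x ∈ Z → L = 1) ∧
      ((¬ ∃ y ∈ Z, φ y - φ x = d x y ∨ φ x - φ y = d y x) → L = 0) := by
  intro x
  have hf : Continuous fun y => φ y + d y x :=
    (continuous_of_forall_sub_le hd_refl hd_cont hφ).add
      (hd_cont.comp (continuous_id.prodMk continuous_const))
  obtain ⟨y₀, hy₀, hmin⟩ := hZc.exists_isMinOn hZne hf.continuousOn
  set a := φ y₀ + d y₀ x - φ x
  have ha : 0 ≤ a := by linarith [hφ y₀ x]
  have hφd_eq : ∀ᶠ δ in 𝓝[>] 0, max (δ - a) 0 / δ = (φ x - φd δ x) / δ := by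
    filter_upwards [self_mem_nhdsWithin] with δ (hδ : 0 < δ)
    have hx : ∀ y, φ x + d x x ≤ φ y + d y x := fun y => by linarith [hφ y x, hd_refl x]
    rw [hφd δ hδ x, iInf_sub_mul_indicator_eq_min hx hy₀ hmin hδ.le, hd_refl, add_zero]
    congr 1
    rcases le_total δ a with hδa | hδa
    · rw [max_eq_right (by linarith), min_eq_left (by linarith), sub_self]
    · rw [max_eq_left (by linarith), min_eq_right (by linarith)]
      ring
  refine ⟨if a = 0 then 1 else 0, by split_ifs <;> norm_num,
    (tendsto_max_sub_div_nhdsGT ha).congr' hφd_eq, fun hxZ => ?_, fun hS => ?_⟩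
  · have : φ y₀ + d y₀ x ≤ φ x + d x x := hmin hxZ
    rw [if_pos (by linarith [hd_refl x])]
  · refine if_neg fun ha0 => hS ⟨y₀, hy₀, Or.inr ?_⟩
    linarith

/-- The limit `Φ(x) = lim_{δ↓0} (φ(x) − φ_δ(x))/δ` exists in `[0,1]` at every point,
equals `1` on `Z`, and equals `0` outside the saturation `S(Z)` of `Z`. -/
theorem stmt_8 {X : Type*} [TopologicalSpace X] [Nonempty X]
    (d : X → X → ℝ)
    (hd_nonneg : ∀ x y, 0 ≤ d x y)
    (hd_refl : ∀ x, d x x = 0)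
    (hd_tri : ∀ x y z, d x y ≤ d x z + d z y)
    (hd_cont : Continuous fun p : X × X => d p.1 p.2)
    (φ : X → ℝ) (hφ : ∀ x y, φ y - φ x ≤ d x y)
    (Z : Set X) (hZne : Z.Nonempty) (hZc : IsCompact Z)
    (φd : ℝ → X → ℝ)
    (hφd : ∀ δ : ℝ, 0 < δ → ∀ x,
      φd δ x = ⨅ y : X, (φ y + d y x - δ * Set.indicator Z (fun _ => (1 : ℝ)) y)) :
    ∀ x : X, ∃ L : ℝ, L ∈ Set.Icc (0 : ℝ) 1 ∧
      Tendsto (fun δ : ℝ => (φ x - φd δ x) / δ) (𝓝[>] (0 : ℝ)) (𝓝 L) ∧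
      (x ∈ Z → L = 1) ∧
      ((¬ ∃ y ∈ Z, φ y - φ x = d x y ∨ φ x - φ y = d y x) → L = 0) :=
  stmt_8_general d hd_refl hd_cont φ hφ Z hZne hZc φd hφd
end

section
/- Let I ⊆ ℝ be an open interval, K ∈ ℝ, ψ : I → ℝ a C² function, and ρ := e^{−ψ}. Assume that for all s < t in I (with t − s < π/√(−K) in case K < 0) and all λ ∈ (0,1), ρ((1−λ)s + λt) ≥ ( σ^{(1−λ)}_{−K}(t−s) · ρ(s)^{−1} + σ^{(λ)}_{−K}(t−s) · ρ(t)^{−1} )^{−1}. Then ψ''(t) + ψ'(t)² ≥ K for every t ∈ I. -/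
/-!
With `h = e^ψ = 1/ρ`, the `CD` inequality at `λ = 1/2` for the points `t ± ε` reads, after the
double-angle formula `s_κ(2ε) = 2 s_κ(ε) c_κ(ε)` (where `c_κ = s_κ'`), as
`2 c_{-K}(ε) h(t) ≤ h(t - ε) + h(t + ε)`. Dividing
`h(t + ε) + h(t - ε) - 2 h(t) ≥ (2 c_{-K}(ε) - 2) h(t)` by `ε²` and letting `ε → 0⁺`, the
symmetric second difference quotients converge to `h''(t) = h(t) (ψ''(t) + ψ'(t)²)` and to
`c_{-K}''(0) h(t) = K h(t)`.
-/

/-- The comparison function `s_κ`: solution of `f'' + κ f = 0`, `f(0) = 0`, `f'(0) = 1`. -/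
noncomputable def sk (κ r : ℝ) : ℝ :=
  if 0 < κ then Real.sin (Real.sqrt κ * r) / Real.sqrt κ
  else if κ = 0 then r
  else Real.sinh (Real.sqrt (-κ) * r) / Real.sqrt (-κ)

/-- The distortion coefficient `σ^{(λ)}_κ(r) = s_κ(λ r)/s_κ(r)`, with `σ^{(λ)}_κ(0) = λ`. -/
noncomputable def sigmaCoeff (κ lam r : ℝ) : ℝ :=
  if r = 0 then lam else sk κ (lam * r) / sk κ r

open Filter Topology

theorem tendsto_symmetric_second_difference_quotient {f : ℝ → ℝ} {x L : ℝ}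
    (hf : ∀ᶠ y in 𝓝 x, DifferentiableAt ℝ f y) (hf' : HasDerivAt (deriv f) L x) :
    Tendsto (fun ε => (f (x + ε) + f (x - ε) - 2 * f x) / ε ^ 2) (𝓝[>] 0) (𝓝 L) := by
  have hf_near :
      ∀ᶠ ε in 𝓝[>] (0 : ℝ), DifferentiableAt ℝ f (x + ε) ∧ DifferentiableAt ℝ f (x - ε) :=
    eventually_nhdsWithin_of_eventually_nhds <|
      ((continuous_const_add x).tendsto' 0 x (add_zero x)).eventually hf |>.and
        (((continuous_sub_left x).tendsto' 0 x (sub_zero x)).eventually hf)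
  have hc : ContinuousAt f x := hf.self_of_nhds.continuousAt
  have hcont : ContinuousAt (fun ε => f (x + ε) + f (x - ε) - 2 * f x) 0 :=
    ((hc.comp_of_eq (continuous_const_add x).continuousAt (add_zero x)).add
      (hc.comp_of_eq (continuous_sub_left x).continuousAt (sub_zero x))).sub continuousAt_const
  apply HasDerivAt.lhopital_zero_nhdsGT
    (f' := fun ε => deriv f (x + ε) - deriv f (x - ε)) (g' := fun ε => 2 * ε)
  · filter_upwards [hf_near] with ε ⟨hp, hm⟩
    have hp' := hp.hasDerivAt.comp_const_add x ε
    have hm' := hm.hasDerivAt.comp_const_sub x ε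
    simpa [sub_eq_add_neg] using (hp'.add hm').sub_const (2 * f x)
  · exact Eventually.of_forall fun ε => by simpa [mul_comm] using hasDerivAt_pow 2 ε
  · filter_upwards [self_mem_nhdsWithin] with ε (hε : 0 < ε)
    positivity
  · simpa [two_mul] using hcont.tendsto.mono_left nhdsWithin_le_nhds
  · exact (Continuous.tendsto' (by fun_prop) 0 0 (by simp)).mono_left nhdsWithin_le_nhds
  · have hright := hf'.tendsto_slope_zero_right
    have hleft := hf'.tendsto_slope_zero_left.comp
      (by simpa using tendsto_neg_nhdsGT (a := (0 : ℝ)))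
    refine (by simpa using (hright.add hleft).div_const 2 : Tendsto _ _ (𝓝 L)).congr' ?_
    filter_upwards [self_mem_nhdsWithin] with ε (hε : 0 < ε)
    simp only [← sub_eq_add_neg]
    field_simp
    ring

noncomputable def ck (κ r : ℝ) : ℝ :=
  if 0 < κ then Real.cos (Real.sqrt κ * r)
  else if κ = 0 then 1
  else Real.cosh (Real.sqrt (-κ) * r)

section Comparison

variable {κ : ℝ}

theorem sk_zero : sk κ 0 = 0 := by
  unfold sk; split_ifs <;> simp

theorem ck_zero : ck κ 0 = 1 := by
  unfold ck; split_ifs <;> simp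

theorem ck_neg (r : ℝ) : ck κ (-r) = ck κ r := by
  unfold ck; split_ifs <;> simp

theorem sk_two_mul (r : ℝ) : sk κ (2 * r) = 2 * sk κ r * ck κ r := by
  unfold sk ck
  split_ifs with hpos hzero
  · rw [mul_left_comm, Real.sin_two_mul]; ring
  · ring
  · rw [mul_left_comm, Real.sinh_two_mul]; ring

theorem hasDerivAt_sk (r : ℝ) : HasDerivAt (sk κ) (ck κ r) r := by
  unfold sk ck
  split_ifs with hpos hzero
  · have hs : Real.sqrt κ ≠ 0 := (Real.sqrt_pos.2 hpos).ne'
    refine (((hasDerivAt_id' r).const_mul _).sin.div_const _).congr_deriv ?_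
    field_simp
  · exact hasDerivAt_id r
  · have hs : Real.sqrt (-κ) ≠ 0 :=
      (Real.sqrt_pos.2 (neg_pos.2 (lt_of_le_of_ne (not_lt.1 hpos) hzero))).ne'
    refine (((hasDerivAt_id' r).const_mul _).sinh.div_const _).congr_deriv ?_
    field_simp

theorem hasDerivAt_ck (r : ℝ) : HasDerivAt (ck κ) (-κ * sk κ r) r := by
  unfold sk ck
  split_ifs with hpos hzero
  · have hs : Real.sqrt κ ≠ 0 := (Real.sqrt_pos.2 hpos).ne'
    convert ((hasDerivAt_id' r).const_mul (Real.sqrt κ)).cos using 1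
    field_simp
    rw [Real.sq_sqrt hpos.le]
  · simpa [hzero] using hasDerivAt_const r (1 : ℝ)
  · have hneg : 0 < -κ := neg_pos.2 (lt_of_le_of_ne (not_lt.1 hpos) hzero)
    have hs : Real.sqrt (-κ) ≠ 0 := (Real.sqrt_pos.2 hneg).ne'
    convert ((hasDerivAt_id' r).const_mul (Real.sqrt (-κ))).cosh using 1
    field_simp
    rw [Real.sq_sqrt hneg.le]
    ring

theorem deriv_ck : deriv (ck κ) = fun r => -κ * sk κ r :=
  funext fun r => (hasDerivAt_ck r).deriv

theorem sigmaCoeff_half_two_mul {r : ℝ} (hr : sk κ r ≠ 0) :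
    sigmaCoeff κ (1 / 2) (2 * r) = (2 * ck κ r)⁻¹ := by
  have hr0 : r ≠ 0 := by rintro rfl; exact hr sk_zero
  rw [sigmaCoeff, if_neg (mul_ne_zero two_ne_zero hr0), show 1 / 2 * (2 * r) = r by ring,
    sk_two_mul, mul_comm 2, mul_assoc, div_mul_cancel_left₀ hr]

theorem eventually_sk_ne_zero : ∀ᶠ r in 𝓝[>] (0 : ℝ), sk κ r ≠ 0 := by
  have := (hasDerivAt_sk (κ := κ) 0).eventually_ne (c := 0) (by simp [ck_zero])
  exact this.filter_mono (nhdsGT_le_nhdsNE 0)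

theorem hasDerivAt_deriv_ck_zero : HasDerivAt (deriv (ck κ)) (-κ) 0 := by
  rw [deriv_ck]
  simpa [ck_zero] using (hasDerivAt_sk 0).const_mul (-κ)

theorem two_mul_ck_mul_inv_le_of_sigmaCoeff {ε a b m : ℝ} (hε : sk κ ε ≠ 0)
    (ha : 0 < a) (hb : 0 < b) (hm : 0 < m)
    (H : m ≥ (sigmaCoeff κ (1 / 2) (2 * ε) * a⁻¹ + sigmaCoeff κ (1 / 2) (2 * ε) * b⁻¹)⁻¹) :
    2 * ck κ ε * m⁻¹ ≤ a⁻¹ + b⁻¹ := by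
  rw [sigmaCoeff_half_two_mul hε, ← mul_add, mul_inv, inv_inv, ge_iff_le,
    mul_inv_le_iff₀ (by positivity)] at H
  rw [← div_eq_mul_inv, div_le_iff₀ hm]
  linarith

end Comparison

theorem hasDerivAt_deriv_exp_comp {ψ : ℝ → ℝ} {x : ℝ}
    (hψ : ∀ᶠ y in 𝓝 x, DifferentiableAt ℝ ψ y) (hψ' : DifferentiableAt ℝ (deriv ψ) x) :
    HasDerivAt (deriv fun y => Real.exp (ψ y))
      (Real.exp (ψ x) * (deriv (deriv ψ) x + deriv ψ x ^ 2)) x := by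
  have hderiv : (deriv fun y => Real.exp (ψ y)) =ᶠ[𝓝 x] fun y => Real.exp (ψ y) * deriv ψ y :=
    hψ.mono fun y hy => deriv_exp hy
  refine ((hψ.self_of_nhds.hasDerivAt.exp.mul hψ'.hasDerivAt).congr_deriv ?_).congr_of_eventuallyEq
    hderiv
  ring

theorem eventually_two_mul_ck_mul_inv_le_of_CD {I : Set ℝ} (hI : IsOpen I) {K : ℝ} {ρ : ℝ → ℝ}
    (hρ : ∀ x, 0 < ρ x)
    (hCD : ∀ s ∈ I, ∀ t ∈ I, s < t →
      (K < 0 → t - s < Real.pi / Real.sqrt (-K)) →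
      ∀ lam ∈ Set.Ioo (0 : ℝ) 1,
        ρ ((1 - lam) * s + lam * t) ≥
          (sigmaCoeff (-K) (1 - lam) (t - s) * (ρ s)⁻¹ +
            sigmaCoeff (-K) lam (t - s) * (ρ t)⁻¹)⁻¹)
    {t : ℝ} (ht : t ∈ I) :
    ∀ᶠ ε in 𝓝[>] (0 : ℝ), 2 * ck (-K) ε * (ρ t)⁻¹ ≤ (ρ (t - ε))⁻¹ + (ρ (t + ε))⁻¹ := by
  have h_mem : ∀ᶠ ε in 𝓝 (0 : ℝ), t - ε ∈ I ∧ t + ε ∈ I :=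
    ((continuous_sub_left t).tendsto' 0 t (sub_zero t)).eventually (hI.mem_nhds ht) |>.and
      (((continuous_const_add t).tendsto' 0 t (add_zero t)).eventually (hI.mem_nhds ht))
  have h_short : ∀ᶠ ε in 𝓝 (0 : ℝ), K < 0 → 2 * ε < Real.pi / Real.sqrt (-K) := by
    rcases lt_or_ge K 0 with hK | hK
    · have hpos : 0 < Real.pi / Real.sqrt (-K) :=
        div_pos Real.pi_pos (Real.sqrt_pos.2 (neg_pos.2 hK))
      exact ((continuous_const_mul 2).tendsto' 0 0 (mul_zero 2)).eventually
        (eventually_lt_nhds hpos) |>.mono fun _ h _ => h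
    · exact Eventually.of_forall fun _ h => absurd h (not_lt.2 hK)
  filter_upwards [eventually_nhdsWithin_of_eventually_nhds (h_mem.and h_short),
    eventually_sk_ne_zero, self_mem_nhdsWithin] with ε ⟨⟨hs, ht'⟩, hπ⟩ hsk (hε : 0 < ε)
  have hmid := hCD (t - ε) hs (t + ε) ht' (by linarith) (by convert hπ using 2; ring)
    (1 / 2) ⟨by norm_num, by norm_num⟩
  rw [show (1 - 1 / 2 : ℝ) * (t - ε) + 1 / 2 * (t + ε) = t by ring,
    show t + ε - (t - ε) = 2 * ε by ring, show (1 - 1 / 2 : ℝ) = 1 / 2 by norm_num] at hmid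
  exact two_mul_ck_mul_inv_le_of_sigmaCoeff hsk (hρ _) (hρ _) (hρ t) hmid

theorem stmt_13_general (I : Set ℝ) (hI_open : IsOpen I)
    (K : ℝ) (ψ : ℝ → ℝ) (hψ : ContDiffOn ℝ 2 ψ I)
    (ρ : ℝ → ℝ) (hρ : ∀ t, ρ t = Real.exp (-ψ t))
    (hCD : ∀ s ∈ I, ∀ t ∈ I, s < t →
      (K < 0 → t - s < Real.pi / Real.sqrt (-K)) →
      ∀ lam ∈ Set.Ioo (0 : ℝ) 1,
        ρ ((1 - lam) * s + lam * t) ≥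
          (sigmaCoeff (-K) (1 - lam) (t - s) * (ρ s)⁻¹ +
            sigmaCoeff (-K) lam (t - s) * (ρ t)⁻¹)⁻¹) :
    ∀ t ∈ I, deriv (deriv ψ) t + (deriv ψ t) ^ 2 ≥ K := by
  intro t ht
  have hψ_diff : ∀ᶠ y in 𝓝 t, DifferentiableAt ℝ ψ y :=
    Filter.mem_of_superset (hI_open.mem_nhds ht) fun y hy =>
      (hψ.contDiffAt (hI_open.mem_nhds hy)).differentiableAt (by norm_num)
  have hψ'_diff : DifferentiableAt ℝ (deriv ψ) t :=
    ((hψ.deriv_of_isOpen hI_open one_add_one_eq_two.le).contDiffAt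
      (hI_open.mem_nhds ht)).differentiableAt one_ne_zero
  have h_lim := tendsto_symmetric_second_difference_quotient
    (hψ_diff.mono fun _ hy => hy.exp) (hasDerivAt_deriv_exp_comp hψ_diff hψ'_diff)
  have ck_lim := tendsto_symmetric_second_difference_quotient
    (Eventually.of_forall fun r => (hasDerivAt_ck (κ := -K) r).differentiableAt)
    hasDerivAt_deriv_ck_zero
  have h_le : ∀ᶠ ε in 𝓝[>] (0 : ℝ),
      (ck (-K) (0 + ε) + ck (-K) (0 - ε) - 2 * ck (-K) 0) / ε ^ 2 * Real.exp (ψ t) ≤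
        (Real.exp (ψ (t + ε)) + Real.exp (ψ (t - ε)) - 2 * Real.exp (ψ t)) / ε ^ 2 := by
    filter_upwards [eventually_two_mul_ck_mul_inv_le_of_CD hI_open
      (fun x => (hρ x).symm ▸ Real.exp_pos _) hCD ht] with ε hε
    simp only [hρ, Real.exp_neg, inv_inv] at hε
    rw [zero_add, zero_sub, ck_neg, ck_zero, div_mul_eq_mul_div]
    gcongr
    linarith
  have hK := le_of_tendsto_of_tendsto (ck_lim.mul_const _) h_lim h_le
  rw [neg_neg] at hK
  exact le_of_mul_le_mul_left (by linarith) (Real.exp_pos (ψ t))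

/-- The one-dimensional curvature-dimension inequality `CD(K,0)` (case `N = 0`) for a
smooth density `ρ = e^{−ψ}` on an open interval implies the differential inequality
`ψ'' + (ψ')² ≥ K`. -/
theorem stmt_13 (I : Set ℝ) (hI_open : IsOpen I) (hI_conn : I.OrdConnected)
    (K : ℝ) (ψ : ℝ → ℝ) (hψ : ContDiffOn ℝ 2 ψ I)
    (ρ : ℝ → ℝ) (hρ : ∀ t, ρ t = Real.exp (-ψ t))
    (hCD : ∀ s ∈ I, ∀ t ∈ I, s < t →
      (K < 0 → t - s < Real.pi / Real.sqrt (-K)) →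
      ∀ lam ∈ Set.Ioo (0 : ℝ) 1,
        ρ ((1 - lam) * s + lam * t) ≥
          (sigmaCoeff (-K) (1 - lam) (t - s) * (ρ s)⁻¹ +
            sigmaCoeff (-K) lam (t - s) * (ρ t)⁻¹)⁻¹) :
    ∀ t ∈ I, deriv (deriv ψ) t + (deriv ψ t) ^ 2 ≥ K :=
  stmt_13_general I hI_open K ψ hψ ρ hρ hCD
end
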